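/- arXiv:2204.11133 — 3 statements merged into one kernel-verified Lean document; each statement's English description precedes it below -/
import Mathlib

section
/- Let H be a real inner product space, let φ₁, …, φ_M ∈ H, let 𝒦 ∈ ℝ^{M×M} be the Gram matrix 𝒦_{ij} = ⟨φ_i, φ_j⟩, let k ≥ 1 be an integer and λ a real number. Define φ̂_I = (1/M)·Σ_{i=1}^M φ_i. Then for every binary vector z ∈ {0,1}^M with Σ_{i=1}^M z_i = k, setting φ̂_C = (1/k)·Σ_{i=1}^M z_i·φ_i, the QUBO objective with matrix Q = (1/k²)·𝒦 + λ·1_M·1_Mᵀ and linear term q = −2·((1/(kM))·𝒦·1_M + λk·1_M) satisfies zᵀQz + qᵀz = ‖φ̂_I − φ̂_C‖² − ‖φ̂_I‖² − λk². -/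
open Matrix BigOperators RealInnerProductSpace

/-!
With `𝒦 = gram ℝ φ`, every quadratic form of `𝒦` is an inner product,
`a ⬝ᵥ 𝒦 *ᵥ b = ⟪∑ aᵢ φᵢ, ∑ bᵢ φᵢ⟫`, and the constraint `∑ zᵢ = k` makes the rank-one
penalty contribute `λ (1 ⬝ᵥ z)² = λ k²`. Expanding `‖φ̂_I - φ̂_C‖² - ‖φ̂_I‖² = ‖φ̂_C‖² - 2⟪φ̂_I, φ̂_C⟫`
then matches both sides term by term.
-/

theorem Matrix.dotProduct_vecMulVec_mulVec {ι R : Type*} [Fintype ι] [CommSemiring R]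
    (x u v w : ι → R) : x ⬝ᵥ vecMulVec u v *ᵥ w = (x ⬝ᵥ u) * (v ⬝ᵥ w) := by
  rw [vecMulVec_mulVec, op_smul_eq_smul, dotProduct_smul, smul_eq_mul, mul_comm]

theorem Matrix.dotProduct_gram_mulVec_real {ι E : Type*} [Fintype ι] [NormedAddCommGroup E]
    [InnerProductSpace ℝ E] (v : ι → E) (x y : ι → ℝ) :
    x ⬝ᵥ gram ℝ v *ᵥ y = ⟪∑ i, x i • v i, ∑ i, y i • v i⟫ :=
  star_dotProduct_gram_mulVec v x y

theorem kdc_qubo_discrepancy_general {H : Type*} [NormedAddCommGroup H] [InnerProductSpace ℝ H]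
    (M : ℕ) (φ : Fin M → H)
    (𝒦 : Matrix (Fin M) (Fin M) ℝ) (h𝒦 : ∀ i j, 𝒦 i j = ⟪φ i, φ j⟫)
    (k : ℕ) (lam : ℝ)
    (z : Fin M → ℝ)
    (hsum : ∑ i, z i = (k : ℝ)) :
    let one : Fin M → ℝ := fun _ => 1
    let φI : H := (M : ℝ)⁻¹ • ∑ i, φ i
    let φC : H := (k : ℝ)⁻¹ • ∑ i, z i • φ i
    let Q : Matrix (Fin M) (Fin M) ℝ :=
      ((k : ℝ) ^ 2)⁻¹ • 𝒦 + lam • vecMulVec one one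
    let q : Fin M → ℝ :=
      (-2 : ℝ) • ((((k : ℝ) * (M : ℝ))⁻¹) • (𝒦 *ᵥ one) + (lam * (k : ℝ)) • one)
    z ⬝ᵥ Q *ᵥ z + q ⬝ᵥ z = ‖φI - φC‖ ^ 2 - ‖φI‖ ^ 2 - lam * (k : ℝ) ^ 2 := by
  intro one φI φC Q q
  obtain rfl : 𝒦 = gram ℝ φ := Matrix.ext h𝒦
  have hz : z ⬝ᵥ one = k := (dotProduct_one z).trans hsum
  have hsum_φ : ∑ i, φ i = ∑ i, one i • φ i := by simp [one]
  have hQ : z ⬝ᵥ Q *ᵥ z = ((k : ℝ) ^ 2)⁻¹ * ⟪∑ i, z i • φ i, ∑ i, z i • φ i⟫ + lam * k ^ 2 := by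
    simp only [Q, add_mulVec, smul_mulVec, dotProduct_add, dotProduct_smul, smul_eq_mul,
      dotProduct_vecMulVec_mulVec, dotProduct_gram_mulVec_real, hz, dotProduct_comm one z]
    ring
  have hq : q ⬝ᵥ z = -2 * (((k : ℝ) * M)⁻¹ * ⟪∑ i, z i • φ i, ∑ i, φ i⟫ + lam * k ^ 2) := by
    rw [dotProduct_comm]
    simp only [q, dotProduct_smul, dotProduct_add, smul_eq_mul, dotProduct_gram_mulVec_real, hz,
      ← hsum_φ]
    ring
  rw [hQ, hq, norm_sub_sq_real, ← real_inner_self_eq_norm_sq φC]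
  simp only [φC, φI, real_inner_smul_left, real_inner_smul_right, real_inner_comm (∑ i, φ i)]
  ring

/-- KDC QUBO versus the kernel mean discrepancy (Proposition 2): for a Gram matrix
`𝒦` of feature vectors `φ i` and a binary vector `z` selecting exactly `k` points,
`zᵀQz + qᵀz = ‖φ̂_I − φ̂_C‖² − ‖φ̂_I‖² − λk²`. -/
theorem kdc_qubo_discrepancy {H : Type*} [NormedAddCommGroup H] [InnerProductSpace ℝ H]
    (M : ℕ) (hM : 1 ≤ M) (φ : Fin M → H)
    (𝒦 : Matrix (Fin M) (Fin M) ℝ) (h𝒦 : ∀ i j, 𝒦 i j = ⟪φ i, φ j⟫)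
    (k : ℕ) (hk : 1 ≤ k) (lam : ℝ)
    (z : Fin M → ℝ) (hz : ∀ i, z i = 0 ∨ z i = 1)
    (hsum : ∑ i, z i = (k : ℝ)) :
    let one : Fin M → ℝ := fun _ => 1
    let φI : H := (M : ℝ)⁻¹ • ∑ i, φ i
    let φC : H := (k : ℝ)⁻¹ • ∑ i, z i • φ i
    let Q : Matrix (Fin M) (Fin M) ℝ :=
      ((k : ℝ) ^ 2)⁻¹ • 𝒦 + lam • vecMulVec one one
    let q : Fin M → ℝ :=
      (-2 : ℝ) • ((((k : ℝ) * (M : ℝ))⁻¹) • (𝒦 *ᵥ one) + (lam * (k : ℝ)) • one)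
    z ⬝ᵥ Q *ᵥ z + q ⬝ᵥ z = ‖φI - φC‖ ^ 2 - ‖φI‖ ^ 2 - lam * (k : ℝ) ^ 2 :=
  kdc_qubo_discrepancy_general M φ 𝒦 h𝒦 k lam z hsum
end

section
/- Let n, m ≥ 1 and let v ∈ {0,1}^{n·m} be indexed as v_{ij} for i ∈ [n], j ∈ [m]. For each i, let S_i ∈ {0,1}^{nm×nm} be the matrix with (S_i v)_{i'j} = v_{ij} for all i' ≠ i and (S_i v)_{ij} = 0. Then (1) vᵀS_iv = Σ_{i'≠i} Σ_{j=1}^m v_{ij}·v_{i'j} for each i, and (2) vᵀS_iv = 0 holds for all i ∈ [n] if and only if for every j ∈ [m] there is at most one index i ∈ [n] with v_{ij} = 1. -/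
open Matrix BigOperators Finset

/-!
`S_i v` copies row `i` of `v` into every other row, so `vᵀ S_i v` is the sum of the products
`v_{ij} v_{i'j}` over `i' ≠ i`. For a 0/1 vector these products are nonnegative, so the form
vanishes iff each of them does, i.e. iff no column `j` carries two ones.
-/

section

variable {ι κ R : Type*} [Fintype ι] [DecidableEq ι] [Fintype κ] [DecidableEq κ]

def duplicatePenalty [Zero R] [One R] (i : ι) : Matrix (ι × κ) (ι × κ) R :=
  Matrix.of fun p q => if p.1 ≠ i ∧ q.1 = i ∧ q.2 = p.2 then 1 else 0

theorem duplicatePenalty_mulVec_apply [NonAssocSemiring R] (i : ι) (v : ι × κ → R)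
    (p : ι × κ) : (duplicatePenalty i *ᵥ v) p = if p.1 ≠ i then v (i, p.2) else 0 := by
  by_cases hp : p.1 = i
  · simp [duplicatePenalty, mulVec, dotProduct, hp]
  · have hq : ∀ q : ι × κ, (q.1 = i ∧ q.2 = p.2) ↔ q = (i, p.2) := fun q => by
      rw [Prod.ext_iff]
    simp [duplicatePenalty, mulVec, dotProduct, hp, hq]

theorem dotProduct_duplicatePenalty_mulVec [CommSemiring R] (i : ι) (v : ι × κ → R) :
    v ⬝ᵥ duplicatePenalty i *ᵥ v = ∑ i' ∈ univ.filter (· ≠ i), ∑ j, v (i, j) * v (i', j) := by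
  simp only [dotProduct, duplicatePenalty_mulVec_apply, Fintype.sum_prod_type, sum_filter]
  refine sum_congr rfl fun i' _ => ?_
  split_ifs <;> simp [mul_comm]

theorem dotProduct_duplicatePenalty_mulVec_eq_zero_iff [CommSemiring R] [PartialOrder R]
    [IsOrderedRing R] (i : ι) {v : ι × κ → R} (hv : 0 ≤ v) :
    v ⬝ᵥ duplicatePenalty i *ᵥ v = 0 ↔ ∀ i' ≠ i, ∀ j, v (i, j) * v (i', j) = 0 := by
  have hprod : ∀ i' j, 0 ≤ v (i, j) * v (i', j) := fun i' j => mul_nonneg (hv _) (hv _)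
  rw [dotProduct_duplicatePenalty_mulVec, sum_eq_zero_iff_of_nonneg fun i' _ =>
    sum_nonneg fun j _ => hprod i' j]
  simp only [mem_filter, mem_univ, true_and, sum_eq_zero_iff_of_nonneg fun j _ => hprod _ j,
    forall_const]

end

theorem mul_eq_zero_iff_not_and_eq_one {R : Type*} [MulZeroOneClass R] [NeZero (1 : R)]
    {x y : R} (hx : x = 0 ∨ x = 1) (hy : y = 0 ∨ y = 1) : x * y = 0 ↔ ¬(x = 1 ∧ y = 1) := by
  rcases hx with rfl | rfl <;> rcases hy with rfl | rfl <;> simp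

theorem matching_duplicate_constraint_general (n m : ℕ)
    (v : Fin n × Fin m → ℝ) (hv : ∀ p, v p = 0 ∨ v p = 1) :
    let S : Fin n → Matrix (Fin n × Fin m) (Fin n × Fin m) ℝ :=
      fun i => Matrix.of fun p q => if p.1 ≠ i ∧ q.1 = i ∧ q.2 = p.2 then 1 else 0
    (∀ i, v ⬝ᵥ S i *ᵥ v
        = ∑ i' ∈ Finset.univ.filter (· ≠ i), ∑ j, v (i, j) * v (i', j)) ∧
    ((∀ i, v ⬝ᵥ S i *ᵥ v = 0) ↔
      ∀ j : Fin m, ∀ i₁ i₂ : Fin n, v (i₁, j) = 1 → v (i₂, j) = 1 → i₁ = i₂) := by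
  refine ⟨fun i => dotProduct_duplicatePenalty_mulVec i v, ?_⟩
  have hnonneg : 0 ≤ v := fun p => by rcases hv p with h | h <;> simp [h]
  change (∀ i, v ⬝ᵥ duplicatePenalty i *ᵥ v = 0) ↔ _
  simp only [dotProduct_duplicatePenalty_mulVec_eq_zero_iff _ hnonneg,
    mul_eq_zero_iff_not_and_eq_one (hv _) (hv _)]
  constructor
  · intro h j i₁ i₂ h₁ h₂
    by_contra hne
    exact h i₁ i₂ (Ne.symm hne) j ⟨h₁, h₂⟩
  · intro h i i' hne j ⟨h₁, h₂⟩
    exact hne (h j i i' h₁ h₂).symm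

/-- Properties of the duplicate-matching penalty matrices `S_i` (Proposition 3):
(1) `vᵀS_iv = Σ_{i'≠i} Σ_j v_{ij}·v_{i'j}`, and (2) all these quadratic forms vanish
iff every keypoint `y_j` is matched to at most one keypoint `x_i`. -/
theorem matching_duplicate_constraint (n m : ℕ) (hn : 1 ≤ n) (hm : 1 ≤ m)
    (v : Fin n × Fin m → ℝ) (hv : ∀ p, v p = 0 ∨ v p = 1) :
    let S : Fin n → Matrix (Fin n × Fin m) (Fin n × Fin m) ℝ :=
      fun i => Matrix.of fun p q => if p.1 ≠ i ∧ q.1 = i ∧ q.2 = p.2 then 1 else 0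
    (∀ i, v ⬝ᵥ S i *ᵥ v
        = ∑ i' ∈ Finset.univ.filter (· ≠ i), ∑ j, v (i, j) * v (i', j)) ∧
    ((∀ i, v ⬝ᵥ S i *ᵥ v = 0) ↔
      ∀ j : Fin m, ∀ i₁ i₂ : Fin n, v (i₁, j) = 1 → v (i₂, j) = 1 → i₁ = i₂) :=
  matching_duplicate_constraint_general n m v hv
end

section
/- Let H be a real inner product space, φ₁, …, φ_M ∈ H with Gram matrix 𝒦_{ij} = ⟨φ_i, φ_j⟩, and let z, z' ∈ {0,1}^M both satisfy Σ_i z_i = Σ_i z'_i = k for an integer k ≥ 1. Setting φ̂_I = (1/M)·Σ_{i=1}^M φ_i, φ̂_C = (1/k)·Σ_i z_i·φ_i and φ̂_{C'} = (1/k)·Σ_i z'_i·φ_i, and letting G(z) = zᵀ((1/k²)·𝒦 + λ·1_M·1_Mᵀ)z − 2·((1/(kM))·𝒦·1_M + λk·1_M)ᵀz denote the KDC QUBO objective for any real λ, it holds that G(z) ≤ G(z') if and only if ‖φ̂_I − φ̂_C‖² ≤ ‖φ̂_I − φ̂_{C'}‖². In particular, over the feasible set {z ∈ {0,1}^M : Σ_i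 z_i = k}, the minimizers of the KDC QUBO are exactly the minimizers of the kernel density clustering discrepancy ‖φ̂_I − φ̂_C‖². -/
open Matrix BigOperators RealInnerProductSpace

/-!
With `𝒦` the Gram matrix of the `φ i`, the quadratic part of the KDC QUBO is `‖φ̂_C‖²`, and its
linear part is `2 ⟪φ̂_I, φ̂_C⟫` plus penalty terms; on vectors with `∑ i, z i = k` the penalty
`λ (1ᵀz)² - 2 λ k (1ᵀz)` is the constant `-λ k²`. Hence on the feasible set
`G z = ‖φ̂_I - φ̂_C‖² - ‖φ̂_I‖² - λ k²`, which differs from the discrepancy by a constant.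
-/

section

variable {ι H : Type*} [Fintype ι] [NormedAddCommGroup H] [InnerProductSpace ℝ H]

theorem dotProduct_gram_mulVec (φ : ι → H) (x y : ι → ℝ) :
    x ⬝ᵥ gram ℝ φ *ᵥ y = ⟪∑ i, x i • φ i, ∑ i, y i • φ i⟫ := by
  simpa using star_dotProduct_gram_mulVec (𝕜 := ℝ) φ x y

theorem dotProduct_vecMulVec_self_mulVec (u v : ι → ℝ) :
    u ⬝ᵥ vecMulVec v v *ᵥ u = (v ⬝ᵥ u) ^ 2 := by
  rw [vecMulVec_mulVec, dotProduct_comm]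
  simp [sq]

/-- The KDC QUBO objective for a kernel matrix `K`, `m` data points, `c` centroids and
Lagrange multiplier `lam`. -/
noncomputable def kdcQubo (K : Matrix ι ι ℝ) (m c lam : ℝ) (z : ι → ℝ) : ℝ :=
  z ⬝ᵥ ((c ^ 2)⁻¹ • K + lam • vecMulVec (fun _ => 1) (fun _ => 1)) *ᵥ z
    - 2 * (((c * m)⁻¹ • (K *ᵥ fun _ => 1) + (lam * c) • fun _ => 1) ⬝ᵥ z)

theorem kdcQubo_gram_eq (φ : ι → H) (m c lam : ℝ) {z : ι → ℝ} (hz : ∑ i, z i = c) :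
    kdcQubo (gram ℝ φ) m c lam z
      = ‖m⁻¹ • ∑ i, φ i - c⁻¹ • ∑ i, z i • φ i‖ ^ 2
        - (‖m⁻¹ • ∑ i, φ i‖ ^ 2 + lam * c ^ 2) := by
  have h_one : (fun _ => 1) ⬝ᵥ z = c := (one_dotProduct z).trans hz
  have h_lin : (gram ℝ φ *ᵥ fun _ => 1) ⬝ᵥ z = ⟪∑ i, φ i, ∑ i, z i • φ i⟫ := by
    rw [dotProduct_comm, dotProduct_gram_mulVec, real_inner_comm]
    simp
  rw [kdcQubo, add_mulVec, dotProduct_add, smul_mulVec, smul_mulVec, dotProduct_smul,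
    dotProduct_smul, dotProduct_vecMulVec_self_mulVec, h_one, dotProduct_gram_mulVec,
    add_dotProduct, smul_dotProduct, smul_dotProduct, h_lin, h_one]
  simp only [← real_inner_self_eq_norm_sq, inner_sub_left, inner_sub_right, inner_smul_left,
    inner_smul_right, real_inner_comm (∑ i, φ i), conj_trivial, smul_eq_mul]
  ring

end

theorem kdc_qubo_equiv_discrepancy_general {H : Type*} [NormedAddCommGroup H]
    [InnerProductSpace ℝ H]
    (M : ℕ) (φ : Fin M → H)
    (𝒦 : Matrix (Fin M) (Fin M) ℝ) (h𝒦 : ∀ i j, 𝒦 i j = ⟪φ i, φ j⟫)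
    (k : ℕ) (lam : ℝ) :
    let one : Fin M → ℝ := fun _ => 1
    let feas : Set (Fin M → ℝ) :=
      {z | (∀ i, z i = 0 ∨ z i = 1) ∧ ∑ i, z i = (k : ℝ)}
    let G : (Fin M → ℝ) → ℝ := fun z =>
      z ⬝ᵥ (((k : ℝ) ^ 2)⁻¹ • 𝒦 + lam • vecMulVec one one) *ᵥ z
        - 2 * (((((k : ℝ) * (M : ℝ))⁻¹) • (𝒦 *ᵥ one) + (lam * (k : ℝ)) • one) ⬝ᵥ z)
    let φI : H := (M : ℝ)⁻¹ • ∑ i, φ i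
    let φC : (Fin M → ℝ) → H := fun z => (k : ℝ)⁻¹ • ∑ i, z i • φ i
    (∀ z ∈ feas, ∀ z' ∈ feas,
      (G z ≤ G z' ↔ ‖φI - φC z‖ ^ 2 ≤ ‖φI - φC z'‖ ^ 2)) ∧
    (∀ z ∈ feas,
      ((∀ z' ∈ feas, G z ≤ G z') ↔
        (∀ z' ∈ feas, ‖φI - φC z‖ ^ 2 ≤ ‖φI - φC z'‖ ^ 2))) := by
  intro one feas G φI φC
  obtain rfl : 𝒦 = gram ℝ φ := Matrix.ext h𝒦
  have hG : ∀ z ∈ feas, G z = ‖φI - φC z‖ ^ 2 - (‖φI‖ ^ 2 + lam * (k : ℝ) ^ 2) :=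
    fun z hz => kdcQubo_gram_eq φ M k lam hz.2
  have hle : ∀ z ∈ feas, ∀ z' ∈ feas,
      (G z ≤ G z' ↔ ‖φI - φC z‖ ^ 2 ≤ ‖φI - φC z'‖ ^ 2) := fun z hz z' hz' => by
    rw [hG z hz, hG z' hz', sub_le_sub_iff_right]
  exact ⟨hle, fun z hz => forall₂_congr fun z' hz' => hle z hz z' hz'⟩

/-- Equivalence of the KDC QUBO and the kernel density clustering discrepancy
(Proposition 2): on the feasible set of binary vectors selecting exactly `k` points,
`G(z) ≤ G(z')` iff `‖φ̂_I − φ̂_C‖² ≤ ‖φ̂_I − φ̂_{C'}‖²`; in particular, the minimizers of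
the KDC QUBO over the feasible set are exactly the minimizers of the discrepancy. -/
theorem kdc_qubo_equiv_discrepancy {H : Type*} [NormedAddCommGroup H]
    [InnerProductSpace ℝ H]
    (M : ℕ) (hM : 1 ≤ M) (φ : Fin M → H)
    (𝒦 : Matrix (Fin M) (Fin M) ℝ) (h𝒦 : ∀ i j, 𝒦 i j = ⟪φ i, φ j⟫)
    (k : ℕ) (hk : 1 ≤ k) (lam : ℝ) :
    let one : Fin M → ℝ := fun _ => 1
    let feas : Set (Fin M → ℝ) :=
      {z | (∀ i, z i = 0 ∨ z i = 1) ∧ ∑ i, z i = (k : ℝ)}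
    let G : (Fin M → ℝ) → ℝ := fun z =>
      z ⬝ᵥ (((k : ℝ) ^ 2)⁻¹ • 𝒦 + lam • vecMulVec one one) *ᵥ z
        - 2 * (((((k : ℝ) * (M : ℝ))⁻¹) • (𝒦 *ᵥ one) + (lam * (k : ℝ)) • one) ⬝ᵥ z)
    let φI : H := (M : ℝ)⁻¹ • ∑ i, φ i
    let φC : (Fin M → ℝ) → H := fun z => (k : ℝ)⁻¹ • ∑ i, z i • φ i
    (∀ z ∈ feas, ∀ z' ∈ feas,
      (G z ≤ G z' ↔ ‖φI - φC z‖ ^ 2 ≤ ‖φI - φC z'‖ ^ 2)) ∧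
    (∀ z ∈ feas,
      ((∀ z' ∈ feas, G z ≤ G z') ↔
        (∀ z' ∈ feas, ‖φI - φC z‖ ^ 2 ≤ ‖φI - φC z'‖ ^ 2))) :=
  kdc_qubo_equiv_discrepancy_general M φ 𝒦 h𝒦 k lam
end
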